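/- arXiv:2507.05855 — 3 statements merged into one kernel-verified Lean document; each statement's English description precedes it below -/
import Mathlib

section
/- Let V be a finite-dimensional real inner product space, W a finite-dimensional real vector space, and c : V → End(W) a linear map satisfying the Clifford relation c(v) ∘ c(v) = -‖v‖² · id_W for all v ∈ V. Let X : ℝ → V be differentiable at t ∈ ℝ, and write A(s) = c(X(s)) and A'(t) for the derivative of A at t. Then tr(A'(t) ∘ A'(t)) = -‖X'(t)‖² · tr(id_W), where tr denotes the trace of endomorphisms of W. (This is item (1) of Lemma 3.7 of the paper: tr[∂_{x_j}[c(X)] ∂_{x_j}[c(X)]] = -|∇_{e_j}X|² tr[id], stated along one coordinate direction.) -/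
open ContinuousLinearMap

theorem LinearMap.deriv_comp {𝕜 E F : Type*}
    [NontriviallyNormedField 𝕜] [CompleteSpace 𝕜]
    [NormedAddCommGroup E] [NormedSpace 𝕜 E] [FiniteDimensional 𝕜 E]
    [NormedAddCommGroup F] [NormedSpace 𝕜 F]
    (c : E →ₗ[𝕜] F) {X : 𝕜 → E} {t : 𝕜} (hX : DifferentiableAt 𝕜 X t) :
    deriv (fun s => c (X s)) t = c (deriv X t) :=
  ((LinearMap.toContinuousLinearMap c).hasFDerivAt.comp_hasDerivAt t hX.hasDerivAt).deriv

theorem trace_derivClifford_comp_derivClifford_general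
    {V W : Type*} [NormedAddCommGroup V] [InnerProductSpace ℝ V]
    [FiniteDimensional ℝ V]
    [NormedAddCommGroup W] [NormedSpace ℝ W]
    (c : V →ₗ[ℝ] (W →L[ℝ] W))
    (hc : ∀ v : V, (c v).comp (c v) = -‖v‖ ^ 2 • ContinuousLinearMap.id ℝ W)
    (X : ℝ → V) (t : ℝ) (hX : DifferentiableAt ℝ X t)
    (A : ℝ → (W →L[ℝ] W)) (hA : A = fun s => c (X s)) :
    LinearMap.trace ℝ W ((deriv A t).comp (deriv A t)).toLinearMap
      = -‖deriv X t‖ ^ 2 * LinearMap.trace ℝ W (LinearMap.id : W →ₗ[ℝ] W) := by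
  rw [hA, c.deriv_comp hX, hc, toLinearMap_smul, coe_id, map_smul, smul_eq_mul]

/-- Lemma 3.7(1): if `c : V → End(W)` is linear with `c(v)² = -‖v‖² id`, `X : ℝ → V`
is differentiable at `t` and `A(s) = c(X(s))`, then
`tr(A'(t) ∘ A'(t)) = -‖X'(t)‖² · tr(id_W)`. -/
theorem trace_derivClifford_comp_derivClifford
    {V W : Type*} [NormedAddCommGroup V] [InnerProductSpace ℝ V]
    [FiniteDimensional ℝ V]
    [NormedAddCommGroup W] [NormedSpace ℝ W] [FiniteDimensional ℝ W]
    (c : V →ₗ[ℝ] (W →L[ℝ] W))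
    (hc : ∀ v : V, (c v).comp (c v) = -‖v‖ ^ 2 • ContinuousLinearMap.id ℝ W)
    (X : ℝ → V) (t : ℝ) (hX : DifferentiableAt ℝ X t)
    (A : ℝ → (W →L[ℝ] W)) (hA : A = fun s => c (X s)) :
    LinearMap.trace ℝ W ((deriv A t).comp (deriv A t)).toLinearMap
      = -‖deriv X t‖ ^ 2 * LinearMap.trace ℝ W (LinearMap.id : W →ₗ[ℝ] W) :=
  trace_derivClifford_comp_derivClifford_general c hc X t hX A hA
end

section
/- Let V be a finite-dimensional real inner product space, W a finite-dimensional real vector space, and c : V → End(W) a linear map satisfying the Clifford relation c(v) ∘ c(v) = -‖v‖² · id_W for all v ∈ V. Let X : ℝ → V be twice differentiable at t ∈ ℝ, write A(s) = c(X(s)), let A''(t) denote the second derivative of A at t, and let g(s) = ‖X(s)‖². Then tr(A(t) ∘ A''(t)) = ( -(1/2) g''(t) + ‖X'(t)‖² ) · tr(id_W), where tr denotes the trace of endomorphisms of W. (This is item (3) of Lemma 3.7 of the paper: tr[c(X) ∂_{x_j}∂_{x_j}[c(X)]] = ((1/2)|X|⁴ ∂²_{x_j}(|X|⁻²) - |X|⁶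 (∂_{x_j}(|X|⁻²))² + |∇_{e_j}X|²) tr[id], stated along one coordinate direction.) -/
/-!
Polarizing the Clifford relation gives `c(v) c(w) + c(w) c(v) = -2⟪v, w⟫ id`, so by cyclicity
of the trace `tr (c(v) c(w)) = -⟪v, w⟫ tr id`. Since `c` is linear (hence continuous),
`A'' = c(X'')`, while `g'' = 2 (⟪X, X''⟫ + ‖X'‖²)`; substituting `w = X''(t)` gives the identity.
-/

open scoped RealInnerProductSpace Topology

theorem LinearMap.two_mul_trace_mul_of_mul_add_mul_swap {R M : Type*} [CommRing R]
    [AddCommGroup M] [Module R M] [Module.Free R M] [Module.Finite R M]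
    {f g : Module.End R M} {r : R} (h : f * g + g * f = r • 1) :
    2 * LinearMap.trace R M (f * g) = r * LinearMap.trace R M 1 := by
  have htr := congrArg (LinearMap.trace R M) h
  rw [map_add, LinearMap.trace_mul_comm R g f, map_smul, smul_eq_mul] at htr
  rw [two_mul, htr]

section Clifford

variable {V : Type*} [NormedAddCommGroup V] [InnerProductSpace ℝ V]

theorem clifford_mul_add_mul_swap {A : Type*} [Ring A] [Module ℝ A] (c : V →ₗ[ℝ] A)
    (hc : ∀ v, c v * c v = -‖v‖ ^ 2 • (1 : A)) (v w : V) :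
    c v * c w + c w * c v = (-2 * ⟪v, w⟫) • (1 : A) := by
  have h := hc (v + w)
  rw [map_add, add_mul, mul_add, mul_add, hc v, hc w, norm_add_sq_real] at h
  linear_combination (norm := module) h

theorem trace_clifford_comp {W : Type*} [NormedAddCommGroup W] [NormedSpace ℝ W]
    [FiniteDimensional ℝ W] (c : V →ₗ[ℝ] (W →L[ℝ] W))
    (hc : ∀ v : V, (c v).comp (c v) = -‖v‖ ^ 2 • ContinuousLinearMap.id ℝ W) (v w : V) :
    LinearMap.trace ℝ W ((c v).comp (c w)).toLinearMap
      = -⟪v, w⟫ * LinearMap.trace ℝ W (LinearMap.id : W →ₗ[ℝ] W) := by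
  have h := congrArg ContinuousLinearMap.toLinearMapRingHom (clifford_mul_add_mul_swap c hc v w)
  rw [map_add, map_mul, map_mul] at h
  have htr := LinearMap.two_mul_trace_mul_of_mul_add_mul_swap h
  change 2 * LinearMap.trace ℝ W ((c v).comp (c w)).toLinearMap
    = -2 * ⟪v, w⟫ * LinearMap.trace ℝ W LinearMap.id at htr
  linarith

end Clifford

theorem ContinuousLinearMap.deriv_deriv_comp {𝕜 E F : Type*} [NontriviallyNormedField 𝕜]
    [NormedAddCommGroup E] [NormedSpace 𝕜 E] [NormedAddCommGroup F] [NormedSpace 𝕜 F]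
    (L : E →L[𝕜] F) {f : 𝕜 → E} {t : 𝕜}
    (hf : ∀ᶠ s in 𝓝 t, DifferentiableAt 𝕜 f s) (hf' : DifferentiableAt 𝕜 (deriv f) t) :
    deriv (deriv fun s => L (f s)) t = L (deriv (deriv f) t) := by
  have h : deriv (fun s => L (f s)) =ᶠ[𝓝 t] fun s => L (deriv f s) :=
    hf.mono fun s hs => (L.hasFDerivAt.comp_hasDerivAt s hs.hasDerivAt).deriv
  rw [h.deriv_eq]
  exact (L.hasFDerivAt.comp_hasDerivAt t hf'.hasDerivAt).deriv

theorem deriv_deriv_norm_sq {E : Type*} [NormedAddCommGroup E] [InnerProductSpace ℝ E]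
    {f : ℝ → E} {t : ℝ} (hf : ∀ᶠ s in 𝓝 t, DifferentiableAt ℝ f s)
    (hf' : DifferentiableAt ℝ (deriv f) t) :
    deriv (deriv fun s => ‖f s‖ ^ 2) t
      = 2 * (⟪f t, deriv (deriv f) t⟫ + ‖deriv f t‖ ^ 2) := by
  have hsq : (fun s => ‖f s‖ ^ 2) = fun s => ⟪f s, f s⟫ := by
    simp_rw [real_inner_self_eq_norm_sq]
  have h : deriv (fun s => ‖f s‖ ^ 2) =ᶠ[𝓝 t] fun s => 2 * ⟪f s, deriv f s⟫ :=
    hf.mono fun s hs => by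
      rw [hsq, deriv_inner_apply ℝ hs hs, real_inner_comm (f s)]
      ring
  rw [h.deriv_eq, deriv_const_mul _ (hf.self_of_nhds.inner ℝ hf'),
    deriv_inner_apply ℝ hf.self_of_nhds hf', real_inner_self_eq_norm_sq]

/-- Lemma 3.7(3): if `c : V → End(W)` is linear with `c(v)² = -‖v‖² id`, `X : ℝ → V`
is twice differentiable at `t`, `A(s) = c(X(s))` and `g(s) = ‖X(s)‖²`, then
`tr(A(t) ∘ A''(t)) = (-(1/2) g''(t) + ‖X'(t)‖²) · tr(id_W)`. -/
theorem trace_clifford_comp_secondDerivClifford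
    {V W : Type*} [NormedAddCommGroup V] [InnerProductSpace ℝ V]
    [FiniteDimensional ℝ V]
    [NormedAddCommGroup W] [NormedSpace ℝ W] [FiniteDimensional ℝ W]
    (c : V →ₗ[ℝ] (W →L[ℝ] W))
    (hc : ∀ v : V, (c v).comp (c v) = -‖v‖ ^ 2 • ContinuousLinearMap.id ℝ W)
    (X : ℝ → V) (t : ℝ)
    (hX : ∀ᶠ s in nhds t, DifferentiableAt ℝ X s)
    (hX' : DifferentiableAt ℝ (deriv X) t)
    (A : ℝ → (W →L[ℝ] W)) (hA : A = fun s => c (X s))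
    (g : ℝ → ℝ) (hg : g = fun s => ‖X s‖ ^ 2) :
    LinearMap.trace ℝ W ((A t).comp (deriv (deriv A) t)).toLinearMap
      = (-(1 / 2) * deriv (deriv g) t + ‖deriv X t‖ ^ 2) *
        LinearMap.trace ℝ W (LinearMap.id : W →ₗ[ℝ] W) := by
  subst hA hg
  have hA'' : deriv (deriv fun s => c (X s)) t = c (deriv (deriv X) t) :=
    (LinearMap.toContinuousLinearMap c).deriv_deriv_comp hX hX'
  rw [hA'', deriv_deriv_norm_sq hX hX', trace_clifford_comp c hc]
  ring
end

section
/- Let W be a finite-dimensional real vector space, A : ℝ → End(W) a map differentiable at t, and f : ℝ → ℝ a map differentiable at t, such that A(s) ∘ A(s) = -f(s) · id_W for all s in a neighborhood of t. Then tr(A(t) ∘ A'(t) ∘ A(t) ∘ A'(t)) = (1/2) (f'(t))² · tr(id_W) + f(t) · tr(A'(t) ∘ A'(t)). (This is the algebraic identity, obtained from A'A = -f'·id - AA' and cyclicity of the trace, underlying the proof of Lemma 3.7(4) of the paper.) -/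
open ContinuousLinearMap Filter

/-- The algebraic identity behind Lemma 3.7(4): if `A(s) ∘ A(s) = -f(s) · id` near `t`,
with `A` and `f` differentiable at `t`, then
`tr(A(t) ∘ A'(t) ∘ A(t) ∘ A'(t)) = (1/2) f'(t)² · tr(id_W) + f(t) · tr(A'(t) ∘ A'(t))`. -/
theorem trace_comp_deriv_comp_deriv_of_sq_eq_neg_smul_id
    {W : Type*} [NormedAddCommGroup W] [NormedSpace ℝ W] [FiniteDimensional ℝ W]
    (A : ℝ → (W →L[ℝ] W)) (f : ℝ → ℝ) (t : ℝ)
    (hA : DifferentiableAt ℝ A t) (hf : DifferentiableAt ℝ f t)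
    (hrel : ∀ᶠ s in nhds t, (A s).comp (A s) = -f s • ContinuousLinearMap.id ℝ W) :
    LinearMap.trace ℝ W
        (((A t).comp ((deriv A t).comp ((A t).comp (deriv A t)))).toLinearMap)
      = (1 / 2) * (deriv f t) ^ 2 *
          LinearMap.trace ℝ W (LinearMap.id : W →ₗ[ℝ] W)
        + f t * LinearMap.trace ℝ W ((deriv A t).comp (deriv A t)).toLinearMap := by
  have hA' := hA.hasDerivAt
  have hmul : HasDerivAt (fun s => A s * A s)
      (deriv A t * A t + A t * deriv A t) t := hA'.mul hA'
  have hg : HasDerivAt (fun s => -f s • (1 : W →L[ℝ] W)) (-deriv f t • 1) t := by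
    simpa using (hf.hasDerivAt.neg).smul_const (1 : W →L[ℝ] W)
  have hrel' : (fun s => A s * A s) =ᶠ[nhds t] fun s => -f s • (1 : W →L[ℝ] W) := by
    filter_upwards [hrel] with s hs
    simpa [ContinuousLinearMap.mul_def, ContinuousLinearMap.one_def] using hs
  have hmul' : HasDerivAt (fun s => A s * A s) (-deriv f t • 1) t :=
    hg.congr_of_eventuallyEq hrel'
  have hkey : deriv A t * A t + A t * deriv A t = -deriv f t • 1 := hmul.unique hmul'
  have hsq : A t * A t = -f t • 1 := by
    simpa [ContinuousLinearMap.mul_def, ContinuousLinearMap.one_def] using hrel.self_of_nhds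
  -- pass to linear maps
  set b : W →ₗ[ℝ] W := (A t).toLinearMap with hb
  set b' : W →ₗ[ℝ] W := (deriv A t).toLinearMap with hb'
  have hkL : b' * b + b * b' = -deriv f t • 1 := by
    ext x
    have := congrFun (congrArg DFunLike.coe hkey) x
    simpa [hb, hb', ContinuousLinearMap.mul_def] using this
  have hsL : b * b = -f t • 1 := by
    ext x
    have := congrFun (congrArg DFunLike.coe hsq) x
    simpa [hb, hb', ContinuousLinearMap.mul_def] using this
  have htr : LinearMap.trace ℝ W (b * b') = -deriv f t / 2 * LinearMap.trace ℝ W 1 := by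
    have h2 : LinearMap.trace ℝ W (b' * b) + LinearMap.trace ℝ W (b * b')
        = -deriv f t * LinearMap.trace ℝ W 1 := by
      rw [← map_add, hkL, map_smul, smul_eq_mul]
    rw [LinearMap.trace_mul_comm] at h2
    linarith
  have hbb' : b * b' = -deriv f t • 1 - b' * b := by
    rw [← hkL]; abel
  have goal1 : b * (b' * (b * b')) = -deriv f t • (b * b') + f t • (b' * b') := by
    have hba : b' * b = -deriv f t • 1 - b * b' := by rw [← hkL]; abel
    have e1 : b * (b' * (b * b')) = b * (b' * b) * b' := by noncomm_ring
    have e2 : b * (b * b') * b' = (b * b) * (b' * b') := by noncomm_ring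
    rw [e1, hba, mul_sub, sub_mul, mul_smul_comm, mul_one, smul_mul_assoc, e2, hsL,
      smul_mul_assoc, one_mul, neg_smul, neg_smul, sub_neg_eq_add]
  have hcoe : (((A t).comp ((deriv A t).comp ((A t).comp (deriv A t)))).toLinearMap)
      = b * (b' * (b * b')) := rfl
  have hcoe2 : ((deriv A t).comp (deriv A t)).toLinearMap = b' * b' := rfl
  rw [hcoe, hcoe2, goal1, map_add, map_smul, map_smul, smul_eq_mul, smul_eq_mul, htr]
  have : LinearMap.trace ℝ W (1 : W →ₗ[ℝ] W) = LinearMap.trace ℝ W (LinearMap.id : W →ₗ[ℝ] W) := rfl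
  rw [this]
  ring
end
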